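/- arXiv:2208.12407 — 3 statements merged into one kernel-verified Lean document; each statement's English description precedes it below -/
import Mathlib

section
/- Let n ≥ 1, let A, B ∈ ℙ_n, and let t ∈ ℝ. Then A ♮_t B = B ♮_{1-t} A. -/
open Matrix
open scoped ComplexOrder

/-- Real power `A^t = exp(t · log A)` of a Hermitian positive definite matrix, defined via
the functional calculus (spectral decomposition). -/
noncomputable def mpow {n : ℕ} (A : Matrix (Fin n) (Fin n) ℂ) (t : ℝ) :
    Matrix (Fin n) (Fin n) ℂ :=
  if hA : A.IsHermitian then
    (hA.eigenvectorUnitary : Matrix (Fin n) (Fin n) ℂ) *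
      Matrix.diagonal (fun i => ((hA.eigenvalues i ^ t : ℝ) : ℂ)) *
      (star (hA.eigenvectorUnitary : Matrix (Fin n) (Fin n) ℂ))
  else A

/-- Logarithm of a Hermitian positive definite matrix via the functional calculus. -/
noncomputable def mlog {n : ℕ} (A : Matrix (Fin n) (Fin n) ℂ) : Matrix (Fin n) (Fin n) ℂ :=
  if hA : A.IsHermitian then
    (hA.eigenvectorUnitary : Matrix (Fin n) (Fin n) ℂ) *
      Matrix.diagonal (fun i => ((Real.log (hA.eigenvalues i) : ℝ) : ℂ)) *
      (star (hA.eigenvectorUnitary : Matrix (Fin n) (Fin n) ℂ))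
  else A

/-- Metric geometric mean `A # B = A^{1/2} (A^{-1/2} B A^{-1/2})^{1/2} A^{1/2}`. -/
noncomputable def geomMean {n : ℕ} (A B : Matrix (Fin n) (Fin n) ℂ) :
    Matrix (Fin n) (Fin n) ℂ :=
  mpow A (1/2) * mpow (mpow A (-(1/2)) * B * mpow A (-(1/2))) (1/2) * mpow A (1/2)

/-- Weighted spectral geometric mean `A ♮_t B = (A⁻¹ # B)^t A (A⁻¹ # B)^t`. -/
noncomputable def spectralMean {n : ℕ} (t : ℝ) (A B : Matrix (Fin n) (Fin n) ℂ) :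
    Matrix (Fin n) (Fin n) ℂ :=
  mpow (geomMean A⁻¹ B) t * A * mpow (geomMean A⁻¹ B) t

/-!
`X = A⁻¹ # B` is the positive solution of the Riccati equation `X A X = B`, and `Y = B⁻¹ # A`
that of `Y B Y = A`. Positive solutions are unique (conjugating by `B^{1/2}` turns `Y B Y` into
a square, and positive square roots are unique), and `X⁻¹` solves the second equation, so
`Y = X⁻¹`. Hence `Y^{1-t} B Y^{1-t} = X^{t-1} (X A X) X^{t-1} = X^t A X^t`. Only the continuous
functional calculus is used, so the argument runs in any algebra that has one; on positive
definite matrices `mpow` agrees with `CFC.rpow`.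
-/

open scoped Ring

namespace CFC

variable {A : Type*} [PartialOrder A] [Ring A] [StarRing A] [TopologicalSpace A]
  [StarOrderedRing A] [Algebra ℝ A]
  [ContinuousFunctionalCalculus ℝ A IsSelfAdjoint] [NonnegSpectrumClass ℝ A]

noncomputable def geomMean (a b : A) : A :=
  a ^ (1 / 2 : ℝ) * (a ^ (-(1 / 2) : ℝ) * b * a ^ (-(1 / 2) : ℝ)) ^ (1 / 2 : ℝ) * a ^ (1 / 2 : ℝ)

lemma isStrictlyPositive_geomMean {a b : A} (ha : IsStrictlyPositive a)
    (hb : IsStrictlyPositive b) : IsStrictlyPositive (geomMean a b) := by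
  have hs := IsStrictlyPositive.rpow a (1 / 2) ha
  have hr := IsStrictlyPositive.rpow a (-(1 / 2)) ha
  have hrbr : IsStrictlyPositive (a ^ (-(1 / 2) : ℝ) * b * a ^ (-(1 / 2) : ℝ)) :=
    .conjugate_of_isUnit_of_isSelfAdjoint b _ hr.isUnit hr.isSelfAdjoint hb
  exact .conjugate_of_isUnit_of_isSelfAdjoint _ _ hs.isUnit hs.isSelfAdjoint (.rpow _ _ hrbr)

noncomputable def spectralMean (t : ℝ) (a b : A) : A :=
  geomMean a⁻¹ʳ b ^ t * a * geomMean a⁻¹ʳ b ^ t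

lemma rpow_sub_one_mul_mul_rpow_sub_one {a x : A} (hx : IsStrictlyPositive x) (t : ℝ) :
    x ^ (t - 1) * (x * a * x) * x ^ (t - 1) = x ^ t * a * x ^ t := by
  have hl : x ^ (t - 1) * x = x ^ t := by
    nth_rw 2 [← rpow_one x hx.nonneg]; rw [← rpow_add hx.isUnit, sub_add_cancel]
  have hr : x * x ^ (t - 1) = x ^ t := by
    nth_rw 1 [← rpow_one x hx.nonneg]; rw [← rpow_add hx.isUnit, add_sub_cancel]
  calc x ^ (t - 1) * (x * a * x) * x ^ (t - 1)
        = (x ^ (t - 1) * x) * a * (x * x ^ (t - 1)) := by simp only [mul_assoc]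
    _ = x ^ t * a * x ^ t := by rw [hl, hr]

variable [IsSemitopologicalRing A] [T2Space A]

lemma rpow_half_mul_rpow_half (a : A) (ha : 0 ≤ a := by cfc_tac) :
    a ^ (1 / 2 : ℝ) * a ^ (1 / 2 : ℝ) = a := by
  rw [← sqrt_eq_rpow, sqrt_mul_sqrt_self a]

theorem eq_of_mul_mul_eq_mul_mul {b x y : A} (hb : IsStrictlyPositive b) (hx : 0 ≤ x)
    (hy : 0 ≤ y) (h : x * b * x = y * b * y) : x = y := by
  set c := sqrt b
  have hc : IsStrictlyPositive c := hb.sqrt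
  have hcc : c * c = b := sqrt_mul_sqrt_self b
  have hsq : ∀ z : A, (c * z * c) * (c * z * c) = c * (z * b * z) * c := fun z => by
    rw [← hcc]; noncomm_ring
  have hcxc : c * x * c = c * y * c :=
    (mul_self_eq_mul_self_iff _ _ (hc.isSelfAdjoint.conjugate_nonneg hx)
      (hc.isSelfAdjoint.conjugate_nonneg hy)).mp (by rw [hsq, hsq, h])
  exact hc.isUnit.mul_left_cancel (hc.isUnit.mul_right_cancel hcxc)

lemma geomMean_mul_inverse_mul_geomMean {a b : A} (ha : IsStrictlyPositive a)
    (hb : IsStrictlyPositive b) : geomMean a b * a⁻¹ʳ * geomMean a b = b := by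
  set s := a ^ (1 / 2 : ℝ)
  set r := a ^ (-(1 / 2) : ℝ)
  set q := (r * b * r) ^ (1 / 2 : ℝ)
  have hsr : s * r = 1 := rpow_mul_rpow_neg _
  have hrs : r * s = 1 := rpow_neg_mul_rpow _
  have hrr : r * r = a⁻¹ʳ := by
    rw [inverse_eq_rpow_neg_one, ← rpow_add ha.isUnit]; norm_num
  have hqq : q * q = r * b * r := rpow_half_mul_rpow_half _
  calc s * q * s * a⁻¹ʳ * (s * q * s) = s * q * (s * r) * (r * s) * q * s := by
        rw [← hrr]; noncomm_ring
    _ = s * (q * q) * s := by rw [hsr, hrs, mul_one, mul_one, mul_assoc s q q]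
    _ = (s * r) * b * (r * s) := by rw [hqq]; noncomm_ring
    _ = b := by rw [hsr, hrs, one_mul, mul_one]

lemma geomMean_inverse_mul_mul_geomMean_inverse {a b : A} (ha : IsStrictlyPositive a)
    (hb : IsStrictlyPositive b) : geomMean a⁻¹ʳ b * a * geomMean a⁻¹ʳ b = b := by
  simpa only [Ring.inverse_inverse ha.isUnit] using
    geomMean_mul_inverse_mul_geomMean ha.ringInverse hb

lemma inverse_rpow_eq_rpow_neg {x : A} (hx : IsStrictlyPositive x) (t : ℝ) :
    x⁻¹ʳ ^ t = x ^ (-t) := by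
  rw [inverse_eq_rpow_neg_one, rpow_rpow _ _ _ (by norm_num), neg_one_mul]

theorem spectralMean_comm {a b : A} (ha : IsStrictlyPositive a) (hb : IsStrictlyPositive b)
    (t : ℝ) : spectralMean t a b = spectralMean (1 - t) b a := by
  set x := geomMean a⁻¹ʳ b
  have hx : IsStrictlyPositive x := isStrictlyPositive_geomMean ha.ringInverse hb
  have hxa : x * a * x = b := geomMean_inverse_mul_mul_geomMean_inverse ha hb
  have hy : geomMean b⁻¹ʳ a = x⁻¹ʳ := by
    refine eq_of_mul_mul_eq_mul_mul hb
      (isStrictlyPositive_geomMean hb.ringInverse ha).nonneg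
      hx.ringInverse.nonneg ?_
    rw [geomMean_inverse_mul_mul_geomMean_inverse hb ha, ← hxa, ← mul_assoc, ← mul_assoc,
      Ring.inverse_mul_cancel _ hx.isUnit, one_mul, mul_assoc, Ring.mul_inverse_cancel _ hx.isUnit,
      mul_one]
  rw [spectralMean, spectralMean, hy, inverse_rpow_eq_rpow_neg hx, neg_sub,
    ← rpow_sub_one_mul_mul_rpow_sub_one hx, hxa]

end CFC

section Matrix

open scoped MatrixOrder

variable {n : ℕ}

lemma mpow_eq_rpow {A : Matrix (Fin n) (Fin n) ℂ} (hA : A.PosSemidef) (t : ℝ) :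
    mpow A t = A ^ t := by
  rw [CFC.rpow_eq_cfc_real hA.nonneg, hA.isHermitian.cfc_eq]
  unfold mpow Matrix.IsHermitian.cfc
  rw [dif_pos hA.isHermitian]
  rfl

lemma geomMean_eq_cfc_geomMean {A B : Matrix (Fin n) (Fin n) ℂ} (hA : A.PosDef)
    (hB : B.PosSemidef) : geomMean A B = CFC.geomMean A B := by
  have hC : 0 ≤ A ^ (-(1 / 2) : ℝ) * B * A ^ (-(1 / 2) : ℝ) :=
    CFC.rpow_nonneg.isSelfAdjoint.conjugate_nonneg hB.nonneg
  rw [geomMean, mpow_eq_rpow hA.posSemidef, mpow_eq_rpow hA.posSemidef,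
    mpow_eq_rpow (nonneg_iff_posSemidef.mp hC)]
  rfl

lemma spectralMean_eq_cfc_spectralMean {A B : Matrix (Fin n) (Fin n) ℂ} (hA : A.PosDef)
    (hB : B.PosDef) (t : ℝ) : spectralMean t A B = CFC.spectralMean t A B := by
  have hG := CFC.isStrictlyPositive_geomMean hA.inv.isStrictlyPositive hB.isStrictlyPositive
  rw [spectralMean, geomMean_eq_cfc_geomMean hA.inv hB.posSemidef,
    mpow_eq_rpow (nonneg_iff_posSemidef.mp hG.nonneg), nonsing_inv_eq_ringInverse]
  rfl

end Matrix

theorem spectralMean_comm {n : ℕ} (A B : Matrix (Fin n) (Fin n) ℂ)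
    (hA : A.PosDef) (hB : B.PosDef) (t : ℝ) :
    spectralMean t A B = spectralMean (1 - t) B A := by
  rw [spectralMean_eq_cfc_spectralMean hA hB, spectralMean_eq_cfc_spectralMean hB hA]
  open scoped MatrixOrder in
    exact CFC.spectralMean_comm hA.isStrictlyPositive hB.isStrictlyPositive t
end

section
/- Let n ≥ 1, let A, B ∈ ℙ_n, and let s, t, u ∈ ℝ. Then (A ♮_s B) ♮_t (A ♮_u B) = A ♮_{(1-t)s + t u} B. -/
open Matrix
open scoped ComplexOrder

/-!
With `C = A⁻¹ # B`, the means `A ♮_t B = C^t A C^t` run along the curve `γ t = C^t A C^t`.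
The geometric mean solves the Riccati equation: `P⁻¹ # (Z P Z) = Z` for positive definite
`P, Z`. Since `C^(u-s) γ(s) C^(u-s) = γ(u)`, this gives `γ(s)⁻¹ # γ(u) = C^(u-s)`, and then
`γ(s) ♮_t γ(u) = C^((u-s)t) C^s A C^s C^((u-s)t) = γ((1-t)s + tu)`.
-/

open scoped MatrixOrder

lemma Matrix.PosDef.mul_mul_of_posDef {ι : Type*} [Fintype ι] [DecidableEq ι]
    {B C : Matrix ι ι ℂ} (hB : B.PosDef) (hC : C.PosDef) : (C * B * C).PosDef := by
  simpa only [hC.1.eq] using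
    hB.conjTranspose_mul_mul_same (mulVec_injective_iff_isUnit.mpr hC.isUnit)

section

variable {n : ℕ} {A : Matrix (Fin n) (Fin n) ℂ}

lemma Matrix.PosDef.spectrum_pos (hA : A.PosDef) : ∀ x ∈ spectrum ℝ A, 0 < x :=
  (StarOrderedRing.isStrictlyPositive_iff_spectrum_pos A).mp hA.isStrictlyPositive

lemma continuousOn_rpow_spectrum (hA : A.PosDef) (t : ℝ) :
    ContinuousOn (fun x : ℝ => x ^ t) (spectrum ℝ A) :=
  continuousOn_id.rpow_const fun x hx => Or.inl (hA.spectrum_pos x hx).ne'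

lemma mpow_eq_cfc (hA : A.IsHermitian) (t : ℝ) : mpow A t = cfc (fun x : ℝ => x ^ t) A := by
  rw [mpow, dif_pos hA, hA.cfc_eq]
  rfl

lemma mpow_posDef (hA : A.PosDef) (t : ℝ) : (mpow A t).PosDef := by
  rw [mpow_eq_cfc hA.1]
  refine IsStrictlyPositive.posDef <| (cfc_isStrictlyPositive_iff _ A
    (continuousOn_rpow_spectrum hA t)).mpr fun x hx => ?_
  exact Real.rpow_pos_of_pos (hA.spectrum_pos x hx) t

lemma mpow_add (hA : A.PosDef) (s t : ℝ) : mpow A (s + t) = mpow A s * mpow A t := by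
  simp only [mpow_eq_cfc hA.1]
  rw [← cfc_mul _ _ A (continuousOn_rpow_spectrum hA s) (continuousOn_rpow_spectrum hA t)]
  exact cfc_congr fun x hx => Real.rpow_add (hA.spectrum_pos x hx) s t

lemma mpow_mul (hA : A.PosDef) (s t : ℝ) : mpow A (s * t) = mpow (mpow A s) t := by
  have hpos : ∀ y ∈ (fun x : ℝ => x ^ s) '' spectrum ℝ A, y ≠ 0 := by
    rintro - ⟨x, hx, rfl⟩
    exact (Real.rpow_pos_of_pos (hA.spectrum_pos x hx) s).ne'
  rw [mpow_eq_cfc (mpow_posDef hA s).1, mpow_eq_cfc hA.1, mpow_eq_cfc hA.1]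
  refine (cfc_congr fun x hx => Real.rpow_mul (hA.spectrum_pos x hx).le s t).trans ?_
  exact cfc_comp (fun x : ℝ => x ^ t) (fun x : ℝ => x ^ s) A hA.1
    (continuousOn_id.rpow_const fun y hy => Or.inl (hpos y hy)) (continuousOn_rpow_spectrum hA s)

lemma mpow_zero (hA : A.PosDef) : mpow A 0 = 1 := by
  simpa only [mpow_eq_cfc hA.1, Real.rpow_zero] using cfc_const_one ℝ A

lemma mpow_one (hA : A.PosDef) : mpow A 1 = A := by
  simpa only [mpow_eq_cfc hA.1, Real.rpow_one] using cfc_id' ℝ A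

lemma mpow_neg_mul_mpow (hA : A.PosDef) (t : ℝ) : mpow A (-t) * mpow A t = 1 := by
  rw [← mpow_add hA, neg_add_cancel, mpow_zero hA]

lemma mpow_mul_mpow_neg (hA : A.PosDef) (t : ℝ) : mpow A t * mpow A (-t) = 1 := by
  rw [← mpow_add hA, add_neg_cancel, mpow_zero hA]

lemma mpow_inv (hA : A.PosDef) (t : ℝ) : mpow A⁻¹ t = mpow A (-t) := by
  have hinv : A⁻¹ = mpow A (-1) :=
    inv_eq_left_inv (by simpa only [mpow_one hA] using mpow_neg_mul_mpow hA 1)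
  rw [hinv, ← mpow_mul hA, neg_one_mul]

lemma mpow_conj_mpow_conj (hA : A.PosDef) (X : Matrix (Fin n) (Fin n) ℂ) (s t : ℝ) :
    mpow A s * (mpow A t * X * mpow A t) * mpow A s = mpow A (s + t) * X * mpow A (s + t) := by
  calc _ = (mpow A s * mpow A t) * X * (mpow A t * mpow A s) := by simp only [mul_assoc]
    _ = _ := by rw [← mpow_add hA, ← mpow_add hA, add_comm t s]

lemma geomMean_posDef {B : Matrix (Fin n) (Fin n) ℂ} (hA : A.PosDef) (hB : B.PosDef) :
    (geomMean A B).PosDef :=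
  (mpow_posDef (hB.mul_mul_of_posDef (mpow_posDef hA _)) _).mul_mul_of_posDef (mpow_posDef hA _)

lemma geomMean_inv_mul_mul_self {P Z : Matrix (Fin n) (Fin n) ℂ} (hP : P.PosDef)
    (hZ : Z.PosDef) : geomMean P⁻¹ (Z * P * Z) = Z := by
  set R := mpow P (1/2)
  set W := R * Z * R
  have hW : W.PosDef := hZ.mul_mul_of_posDef (mpow_posDef hP _)
  have hRR : R * R = P := by rw [← mpow_add hP]; norm_num [mpow_one hP]
  have hsqrt : mpow (R * (Z * P * Z) * R) (1/2) = W := by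
    rw [← hRR, show R * (Z * (R * R) * Z) * R = W * W by simp only [W, mul_assoc],
      ← mpow_one hW, ← mpow_add hW, ← mpow_mul hW]
    norm_num [mpow_one hW]
  rw [geomMean, mpow_inv hP, mpow_inv hP, neg_neg, hsqrt]
  calc mpow P (-(1/2)) * W * mpow P (-(1/2))
      = (mpow P (-(1/2)) * R) * Z * (R * mpow P (-(1/2))) := by simp only [W, mul_assoc]
    _ = Z := by rw [mpow_neg_mul_mpow hP, mpow_mul_mpow_neg hP, one_mul, mul_one]

lemma geomMean_inv_spectralMean {B : Matrix (Fin n) (Fin n) ℂ} (hA : A.PosDef) (hB : B.PosDef)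
    (s u : ℝ) :
    geomMean (spectralMean s A B)⁻¹ (spectralMean u A B) = mpow (geomMean A⁻¹ B) (u - s) := by
  have hC := geomMean_posDef hA.inv hB
  have hγ : spectralMean u A B =
      mpow (geomMean A⁻¹ B) (u - s) * spectralMean s A B * mpow (geomMean A⁻¹ B) (u - s) := by
    rw [spectralMean, spectralMean, mpow_conj_mpow_conj hC, sub_add_cancel]
  rw [hγ]
  exact geomMean_inv_mul_mul_self (hA.mul_mul_of_posDef (mpow_posDef hC s)) (mpow_posDef hC _)

end

theorem spectralMean_spectralMean_general {n : ℕ} (A B : Matrix (Fin n) (Fin n) ℂ)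
    (hA : A.PosDef) (hB : B.PosDef) (s t u : ℝ) :
    spectralMean t (spectralMean s A B) (spectralMean u A B) =
      spectralMean ((1 - t) * s + t * u) A B := by
  have hC := geomMean_posDef hA.inv hB
  rw [spectralMean, geomMean_inv_spectralMean hA hB, ← mpow_mul hC, spectralMean,
    mpow_conj_mpow_conj hC, spectralMean, show (u - s) * t + s = (1 - t) * s + t * u by ring]

theorem spectralMean_spectralMean {n : ℕ} (hn : 1 ≤ n) (A B : Matrix (Fin n) (Fin n) ℂ)
    (hA : A.PosDef) (hB : B.PosDef) (s t u : ℝ) :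
    spectralMean t (spectralMean s A B) (spectralMean u A B) =
      spectralMean ((1 - t) * s + t * u) A B :=
  spectralMean_spectralMean_general A B hA hB s t u
end

section
/- Let n ≥ 1, let A, B ∈ ℙ_n, and let t ∈ ℝ. Then (A ♮_t B)^{-1} = A^{-1} ♮_t B^{-1}. -/
open Matrix
open scoped ComplexOrder

/-!
Real powers of a positive definite matrix come from the functional calculus, so
`(A ^ t)⁻¹ = A ^ (-t) = (A⁻¹) ^ t`. Hence inversion commutes with the metric geometric mean,
`(A # B)⁻¹ = A⁻¹ # B⁻¹`, and inverting `A ♮_t B = G ^ t A G ^ t` with `G = A⁻¹ # B` gives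
`(G⁻¹) ^ t A⁻¹ (G⁻¹) ^ t`, where `G⁻¹ = A # B⁻¹`.
-/

namespace Matrix

lemma mul_mul_inv_rev {m α : Type*} [Fintype m] [DecidableEq m] [CommRing α]
    (P M Q : Matrix m m α) : (P * M * Q)⁻¹ = Q⁻¹ * M⁻¹ * P⁻¹ := by
  rw [mul_inv_rev, mul_inv_rev, mul_assoc]

lemma continuousOn_spectrum_real {m 𝕜 : Type*} [Fintype m] [DecidableEq m] [RCLike 𝕜]
    (A : Matrix m m 𝕜) (f : ℝ → ℝ) : ContinuousOn f (spectrum ℝ A) :=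
  A.finite_real_spectrum.continuousOn f

variable {n : ℕ} {A B : Matrix (Fin n) (Fin n) ℂ}

lemma mpow_eq_cfc (hA : A.IsHermitian) (t : ℝ) : mpow A t = cfc (· ^ t : ℝ → ℝ) A := by
  rw [mpow, dif_pos hA, hA.cfc_eq, IsHermitian.cfc]
  rfl

lemma posDef_mpow (hA : A.PosDef) (t : ℝ) : (mpow A t).PosDef := by
  rw [mpow, dif_pos hA.isHermitian, Unitary.isUnit_coe.posDef_star_right_conjugate_iff,
    posDef_diagonal_iff]
  exact fun i => RCLike.ofReal_pos.mpr (Real.rpow_pos_of_pos (hA.eigenvalues_pos i) t)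

lemma PosDef.spectrum_pos_s5 (hA : A.PosDef) : ∀ x ∈ spectrum ℝ A, 0 < x := by
  rintro x hx
  rw [hA.isHermitian.spectrum_real_eq_range_eigenvalues] at hx
  obtain ⟨i, rfl⟩ := hx
  exact hA.eigenvalues_pos i

lemma inv_eq_cfc (hA : A.PosDef) : A⁻¹ = cfc (·⁻¹ : ℝ → ℝ) A := by
  have h := cfc_inv id A (fun x hx => (hA.spectrum_pos_s5 x hx).ne') (continuousOn_spectrum_real A _)
    hA.isHermitian.isSelfAdjoint
  rw [cfc_id ℝ A hA.isHermitian.isSelfAdjoint] at h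
  exact (nonsing_inv_eq_ringInverse A).trans h.symm

lemma mpow_neg (hA : A.PosDef) (t : ℝ) : mpow A (-t) = (mpow A t)⁻¹ := by
  rw [mpow_eq_cfc hA.isHermitian, mpow_eq_cfc hA.isHermitian, nonsing_inv_eq_ringInverse,
    ← cfc_inv _ A (fun x hx => (Real.rpow_pos_of_pos (hA.spectrum_pos_s5 x hx) t).ne')
      (continuousOn_spectrum_real A _) hA.isHermitian.isSelfAdjoint]
  exact cfc_congr fun x hx => Real.rpow_neg (hA.spectrum_pos_s5 x hx).le t

lemma inv_mpow (hA : A.PosDef) (t : ℝ) : mpow A⁻¹ t = (mpow A t)⁻¹ := by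
  rw [← mpow_neg hA, mpow_eq_cfc hA.inv.isHermitian, mpow_eq_cfc hA.isHermitian, inv_eq_cfc hA,
    ← cfc_comp' _ _ A ((A.finite_real_spectrum.image _).continuousOn _)
      (continuousOn_spectrum_real A _) hA.isHermitian.isSelfAdjoint]
  exact cfc_congr fun x hx => by
    rw [Real.inv_rpow (hA.spectrum_pos_s5 x hx).le, Real.rpow_neg (hA.spectrum_pos_s5 x hx).le]

lemma posDef_mpow_mul_mul_mpow (hA : A.PosDef) (hB : B.PosDef) (s : ℝ) :
    (mpow A s * B * mpow A s).PosDef := by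
  have h := (posDef_mpow hA s).isUnit.posDef_star_left_conjugate_iff.mpr hB
  rwa [star_eq_conjTranspose, (posDef_mpow hA s).isHermitian.eq] at h

lemma posDef_geomMean (hA : A.PosDef) (hB : B.PosDef) : (geomMean A B).PosDef :=
  posDef_mpow_mul_mul_mpow hA (posDef_mpow (posDef_mpow_mul_mul_mpow hA hB _) _) _

lemma geomMean_inv (hA : A.PosDef) (hB : B.PosDef) :
    (geomMean A B)⁻¹ = geomMean A⁻¹ B⁻¹ := by
  rw [geomMean, geomMean, mul_mul_inv_rev, ← inv_mpow (posDef_mpow_mul_mul_mpow hA hB _),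
    mul_mul_inv_rev, ← inv_mpow hA, ← inv_mpow hA]

end Matrix

theorem spectralMean_inv_general {n : ℕ} (A B : Matrix (Fin n) (Fin n) ℂ)
    (hA : A.PosDef) (hB : B.PosDef) (t : ℝ) :
    (spectralMean t A B)⁻¹ = spectralMean t A⁻¹ B⁻¹ := by
  set G := geomMean A⁻¹ B
  have hG : G.PosDef := posDef_geomMean hA.inv hB
  have hG_inv : G⁻¹ = geomMean A⁻¹⁻¹ B⁻¹ := geomMean_inv hA.inv hB
  calc (spectralMean t A B)⁻¹ = (mpow G t)⁻¹ * A⁻¹ * (mpow G t)⁻¹ := mul_mul_inv_rev _ _ _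
    _ = mpow G⁻¹ t * A⁻¹ * mpow G⁻¹ t := by rw [inv_mpow hG]
    _ = spectralMean t A⁻¹ B⁻¹ := by rw [spectralMean, hG_inv]

theorem spectralMean_inv {n : ℕ} (hn : 1 ≤ n) (A B : Matrix (Fin n) (Fin n) ℂ)
    (hA : A.PosDef) (hB : B.PosDef) (t : ℝ) :
    (spectralMean t A B)⁻¹ = spectralMean t A⁻¹ B⁻¹ :=
  spectralMean_inv_general A B hA hB t
end
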